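/- arXiv:math/9404202 — 3 statements merged into one kernel-verified Lean document; each statement's English description precedes it below -/
import Mathlib

section
/- Let T be an Ã_n-triangle presentation compatible with involution λ on a projective geometry Π. Suppose u, x ∈ Π with λ(u) and x distinct, nonincident, and λ(u) + x = λ(s) ≠ V, and let x', v ∈ Π be such that (s, λ(u), x') ∈ T' and (s, x, λ(v)) ∈ T'. Then λ(x') + v = V, i.e., the word x'v is in normal form. -/
/-- An abstract finite projective geometry of dimension `n` with an involution `lam`
satisfying `lam (Π_i) = Π_{n+1-i}`, together with an Ã_n-triangle presentation `T`
compatible with `lam`, satisfying axioms (A)–(F) of Cartwright–Shapiro.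
Here `T' = {(u,v,w) ∈ T : dim u + dim v + dim w = n+1}`. -/
structure TrianglePresentation (n : ℕ) (P : Type*) where
  dim : P → ℕ
  incid : P → P → Prop
  lam : P → P
  T : P → P → P → Prop
  incid_symm : ∀ x y, incid x y → incid y x
  lam_invol : Function.Involutive lam
  dim_mem : ∀ x, 1 ≤ dim x ∧ dim x ≤ n
  lam_dim : ∀ x, dim (lam x) = n + 1 - dim x
  /-- Axiom (A): `(u,v,w) ∈ T` for some `w` iff `λ(u)` and `v` are distinct and incident. -/
  axiomA : ∀ u v, (∃ w, T u v w) ↔ (lam u ≠ v ∧ incid (lam u) v)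
  /-- Axiom (B): cyclic invariance. -/
  axiomB : ∀ u v w, T u v w → T v w u
  /-- Axiom (C): uniqueness of the third vertex. -/
  axiomC : ∀ u v w₁ w₂, T u v w₁ → T u v w₂ → w₁ = w₂
  /-- Axiom (D). -/
  axiomD : ∀ u v w, T u v w → T (lam w) (lam v) (lam u)
  /-- Axiom (E). -/
  axiomE : ∀ u v w, T u v w →
    dim u + dim v + dim w = n + 1 ∨ dim u + dim v + dim w = 2 * (n + 1)
  /-- Axiom (F), stated for the half `T'` of `T`. -/
  axiomF : ∀ x y u x' y',
    (T x y u ∧ dim x + dim y + dim u = n + 1) →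
    (T x' y' (lam u) ∧ dim x' + dim y' + dim (lam u) = n + 1) →
    ∃ w, (T y' x w ∧ dim y' + dim x + dim w = n + 1) ∧
         (T y x' (lam w) ∧ dim y + dim x' + dim (lam w) = n + 1)
  /-- For `u, v ∈ Π`, `(u,v,w) ∈ T'` for some `w` iff `λ(u) ⊋ v`. -/
  exists_T' : ∀ u v,
    (∃ w, T u v w ∧ dim u + dim v + dim w = n + 1) ↔
      (lam u ≠ v ∧ incid (lam u) v ∧ dim v < dim (lam u))

namespace TrianglePresentation

variable {n : ℕ} {P : Type*} (TP : TrianglePresentation n P)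

/-- The half `T'` of `T` consisting of triples with dimension sum `n+1`. -/
def T' (u v w : P) : Prop :=
  TP.T u v w ∧ TP.dim u + TP.dim v + TP.dim w = n + 1

/-- `T'' = T \ T'`. -/
def T'' (u v w : P) : Prop :=
  TP.T u v w ∧ ¬ (TP.dim u + TP.dim v + TP.dim w = n + 1)

/-- `x ⊂ y`: `x` is incident with `y` and `dim x ≤ dim y` (or `x = y`). -/
def Sub (x y : P) : Prop :=
  x = y ∨ (TP.incid x y ∧ TP.dim x ≤ TP.dim y)

/-- `x ⊊ y`: proper containment. -/
def PSub (x y : P) : Prop :=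
  TP.Sub x y ∧ x ≠ y

/-- `x + y = V`: no element of `Π` contains both `x` and `y`. -/
def SumV (x y : P) : Prop :=
  ¬ ∃ z, TP.Sub x z ∧ TP.Sub y z

/-- `x + y = c`: `c` is the join of `x` and `y` in the projective geometry. -/
def JoinEq (x y c : P) : Prop :=
  TP.Sub x c ∧ TP.Sub y c ∧ ∀ z, TP.Sub x z → TP.Sub y z → TP.Sub c z

end TrianglePresentation


namespace TrianglePresentation

variable {n : ℕ} {P : Type*} (TP : TrianglePresentation n P)

lemma T'_intro {u v w : P} (h : TP.T u v w)
    (hd : TP.dim u + TP.dim v + TP.dim w = n + 1) : TP.T' u v w := ⟨h, hd⟩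

lemma T'_T {u v w : P} (h : TP.T' u v w) : TP.T u v w := h.1

lemma T'_dim {u v w : P} (h : TP.T' u v w) :
    TP.dim u + TP.dim v + TP.dim w = n + 1 := h.2

lemma T'_cyc {u v w : P} (h : TP.T' u v w) : TP.T' v w u :=
  ⟨TP.axiomB u v w h.1, by have := h.2; omega⟩

lemma T'_props {u v w : P} (h : TP.T' u v w) :
    TP.lam u ≠ v ∧ TP.incid (TP.lam u) v ∧ TP.dim v < TP.dim (TP.lam u) :=
  (TP.exists_T' u v).mp ⟨w, h.1, h.2⟩

/-- If `a` and `b` are distinct and incident, then their dimensions differ. -/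
lemma dim_ne_of_incid {a b : P} (hi : TP.incid a b) (hab : a ≠ b) :
    TP.dim a ≠ TP.dim b := by
  intro hd
  obtain ⟨w, hw⟩ := (TP.axiomA (TP.lam a) b).mpr
    (by rw [TP.lam_invol a]; exact ⟨hab, hi⟩)
  have hE := TP.axiomE _ _ _ hw
  have ha := TP.dim_mem a
  have hb := TP.dim_mem b
  have hw' := TP.dim_mem w
  have hla := TP.lam_dim a
  omega

end TrianglePresentation

open TrianglePresentation in
/-- Lemma 1 (forward direction): if `λ(u)` and `x` are distinct and nonincident with
join `λ(u) + x = λ(s) ≠ V`, and `(s, λ(u), x') ∈ T'`, `(s, x, λ(v)) ∈ T'`, then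
`λ(x') + v = V`, i.e. the word `x'v` is in normal form. -/
theorem lemma1_forward {n : ℕ} {P : Type*} (TP : TrianglePresentation n P)
    (u x s x' v : P)
    (hne : TP.lam u ≠ x) (hni : ¬ TP.incid (TP.lam u) x)
    (hjoin : TP.JoinEq (TP.lam u) x (TP.lam s))
    (h1 : TP.T' s (TP.lam u) x') (h2 : TP.T' s x (TP.lam v)) :
    TP.SumV (TP.lam x') v := by
  rintro ⟨z, hxz, hvz⟩
  have linv := TP.lam_invol
  -- cyclic rotations of the hypotheses
  have h1b := TP.T'_cyc h1
  have h1c := TP.T'_cyc h1b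
  have h2b := TP.T'_cyc h2
  have h2c := TP.T'_cyc h2b
  by_cases hxv : TP.lam x' = v
  · -- Case 1 : λ(x') = v, hence λ(v) = x'
    have hvx : TP.lam v = x' := by rw [← hxv, linv x']
    rw [hvx] at h2
    -- h2 : T' s x x' ; rotate to T' x' s x and compare with h1c : T' x' s (λ u)
    have h2cc := TP.T'_cyc (TP.T'_cyc h2)
    exact hne (TP.axiomC x' s (TP.lam u) x (TP.T'_T h1c) (TP.T'_T h2cc))
  · by_cases hz1 : z = TP.lam x'
    · -- Case 2a : the common bound is λ(x') itself, so v ⊊ λ(x')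
      subst hz1
      have hvx' : v ≠ TP.lam x' := fun h => hxv h.symm
      rcases hvz with h | ⟨hinc, hle⟩
      · exact hvx' h
      have hlt : TP.dim v < TP.dim (TP.lam x') :=
        lt_of_le_of_ne hle (TP.dim_ne_of_incid hinc hvx')
      obtain ⟨w3, hw3⟩ := (TP.exists_T' x' v).mpr
        ⟨hxv, TP.incid_symm _ _ hinc, hlt⟩
      have g2 : TP.T' x' v w3 := hw3
      -- rotate to T' w3 x' v, and note v = λ(λ v)
      have g2cc : TP.T' w3 x' (TP.lam (TP.lam v)) := by
        rw [linv v]; exact TP.T'_cyc (TP.T'_cyc g2)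
      obtain ⟨w, hA, hB⟩ := TP.axiomF s x (TP.lam v) w3 x' h2 g2cc
      -- hA : T' x' s w ; compare with h1c : T' x' s (λ u)
      have hwu : w = TP.lam u :=
        TP.axiomC x' s w (TP.lam u) hA.1 (TP.T'_T h1c)
      subst hwu
      -- hB : T' x w3 (λ (λ u)) = T' x w3 u
      rw [linv u] at hB
      have hB' : TP.T' x w3 u := hB
      -- rotate to T' u x w3 and read off incid (λ u) x
      have := TP.T'_props (TP.T'_cyc (TP.T'_cyc hB'))
      exact hni this.2.1
    · by_cases hz2 : z = v
      · -- Case 2b : the common bound is v itself, so λ(x') ⊊ v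
        rw [hz2] at hxz
        rcases hxz with h | ⟨hinc, hle⟩
        · exact hxv h
        have hlt : TP.dim (TP.lam x') < TP.dim v :=
          lt_of_le_of_ne hle (TP.dim_ne_of_incid hinc hxv)
        obtain ⟨w2, hw2⟩ := (TP.exists_T' (TP.lam v) (TP.lam x')).mpr
          (by rw [linv v]
              exact ⟨fun h => hxv h.symm, TP.incid_symm _ _ hinc, hlt⟩)
        have g1 : TP.T' (TP.lam v) (TP.lam x') w2 := hw2
        have g1cc : TP.T' w2 (TP.lam v) (TP.lam x') :=
          TP.T'_cyc (TP.T'_cyc g1)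
        obtain ⟨w, hA, hB⟩ := TP.axiomF s (TP.lam u) x' w2 (TP.lam v) h1 g1cc
        -- hA : T' (λ v) s w ; compare with h2c : T' (λ v) s x
        have hwx : w = x := TP.axiomC (TP.lam v) s w x hA.1 (TP.T'_T h2c)
        rw [hwx] at hB
        -- hB : T' (λ u) w2 (λ x) ; rotate to T' (λ x) (λ u) w2
        have hB' : TP.T' (TP.lam u) w2 (TP.lam x) := hB
        have hp := TP.T'_props (TP.T'_cyc (TP.T'_cyc hB'))
        rw [linv x] at hp
        exact hni (TP.incid_symm _ _ hp.2.1)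
      · -- Case 2c : generic common bound z, with λ(x') ⊊ z and v ⊊ z
        have hx'z : TP.lam x' ≠ z := fun h => hz1 h.symm
        have hvz' : v ≠ z := fun h => hz2 h.symm
        rcases hxz with h | ⟨hinc1, hle1⟩
        · exact hx'z h
        rcases hvz with h | ⟨hinc2, hle2⟩
        · exact hvz' h
        have hlt1 : TP.dim (TP.lam x') < TP.dim z :=
          lt_of_le_of_ne hle1 (TP.dim_ne_of_incid hinc1 hx'z)
        have hlt2 : TP.dim v < TP.dim z :=
          lt_of_le_of_ne hle2 (TP.dim_ne_of_incid hinc2 hvz')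
        obtain ⟨w2, hw2⟩ := (TP.exists_T' (TP.lam z) (TP.lam x')).mpr
          (by rw [linv z]
              exact ⟨fun h => hx'z h.symm, TP.incid_symm _ _ hinc1, hlt1⟩)
        obtain ⟨w3, hw3⟩ := (TP.exists_T' (TP.lam z) v).mpr
          (by rw [linv z]
              exact ⟨fun h => hvz' h.symm, TP.incid_symm _ _ hinc2, hlt2⟩)
        have g1 : TP.T' (TP.lam z) (TP.lam x') w2 := hw2
        have g2 : TP.T' (TP.lam z) v w3 := hw3
        have g1cc : TP.T' w2 (TP.lam z) (TP.lam x') :=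
          TP.T'_cyc (TP.T'_cyc g1)
        have g2cc : TP.T' w3 (TP.lam z) (TP.lam (TP.lam v)) := by
          rw [linv v]; exact TP.T'_cyc (TP.T'_cyc g2)
        obtain ⟨wa, hA1, hA2⟩ :=
          TP.axiomF s (TP.lam u) x' w2 (TP.lam z) h1 g1cc
        obtain ⟨wb, hB1, hB2⟩ :=
          TP.axiomF s x (TP.lam v) w3 (TP.lam z) h2 g2cc
        -- hA1 : T' (λ z) s wa, hB1 : T' (λ z) s wb, so wa = wb =: w
        have hww : wa = wb := TP.axiomC (TP.lam z) s wa wb hA1.1 hB1.1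
        subst hww
        -- hA2 : T' (λ u) w2 (λ wa) ; rotate twice : T' (λ wa) (λ u) w2
        have hA2' : TP.T' (TP.lam u) w2 (TP.lam wa) := hA2
        have hpA := TP.T'_props (TP.T'_cyc (TP.T'_cyc hA2'))
        rw [linv wa] at hpA
        -- hpA : wa ≠ λ u ∧ incid wa (λ u) ∧ dim (λ u) < dim wa
        -- hB2 : T' x w3 (λ wa) ; rotate twice : T' (λ wa) x w3
        have hB2' : TP.T' x w3 (TP.lam wa) := hB2
        have hpB := TP.T'_props (TP.T'_cyc (TP.T'_cyc hB2'))
        rw [linv wa] at hpB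
        -- hpB : wa ≠ x ∧ incid wa x ∧ dim x < dim wa
        -- hA1 : T' (λ z) s wa ; rotate once : T' s wa (λ z)
        have hpC := TP.T'_props (TP.T'_cyc ⟨hA1.1, hA1.2⟩)
        -- hpC : λ s ≠ wa ∧ incid (λ s) wa ∧ dim wa < dim (λ s)
        have hsubu : TP.Sub (TP.lam u) wa :=
          Or.inr ⟨TP.incid_symm _ _ hpA.2.1, le_of_lt hpA.2.2⟩
        have hsubx : TP.Sub x wa :=
          Or.inr ⟨TP.incid_symm _ _ hpB.2.1, le_of_lt hpB.2.2⟩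
        have hsubs : TP.Sub (TP.lam s) wa := hjoin.2.2 wa hsubu hsubx
        rcases hsubs with h | ⟨_, hge⟩
        · exact absurd (congrArg TP.dim h) (by omega)
        · omega
end

section
/- In the setting of Lemma 1, if (s, λ(u), x') ∈ T' and (s, x, λ(v)) ∈ T' where λ(u) and x are distinct nonincident with join λ(s), then λ(x') ≠ v. (First step of Lemma 1: otherwise x' = λ(v) and axioms (B),(C) force λ(u) = x, a contradiction.) -/
namespace TrianglePresentation

variable {n : ℕ} {P : Type*} (TP : TrianglePresentation n P)

theorem mid_eq_of_T {u v₁ v₂ w : P} (h₁ : TP.T u v₁ w) (h₂ : TP.T u v₂ w) :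
    v₁ = v₂ :=
  TP.axiomC w u v₁ v₂ (TP.axiomB _ _ _ (TP.axiomB _ _ _ h₁))
    (TP.axiomB _ _ _ (TP.axiomB _ _ _ h₂))

end TrianglePresentation

theorem lemma1_first_step_general {n : ℕ} {P : Type*} (TP : TrianglePresentation n P)
    (u x s x' v : P)
    (hne : TP.lam u ≠ x)
    (h1 : TP.T' s (TP.lam u) x') (h2 : TP.T' s x (TP.lam v)) :
    TP.lam x' ≠ v := by
  rintro rfl
  rw [TP.lam_invol x'] at h2
  exact hne (TP.mid_eq_of_T h1.1 h2.1)

/-- First step of Lemma 1: under the hypotheses of Lemma 1, `λ(x') ≠ v`. -/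
theorem lemma1_first_step {n : ℕ} {P : Type*} (TP : TrianglePresentation n P)
    (u x s x' v : P)
    (hne : TP.lam u ≠ x) (hni : ¬ TP.incid (TP.lam u) x)
    (hjoin : TP.JoinEq (TP.lam u) x (TP.lam s))
    (h1 : TP.T' s (TP.lam u) x') (h2 : TP.T' s x (TP.lam v)) :
    TP.lam x' ≠ v :=
  lemma1_first_step_general TP u x s x' v hne h1 h2
end

section
/- Let u_1u_2 be in normal form (λ(u_1) + u_2 = V) and x ∈ Π with λ(u_2) ⊊ x, and let w ∈ Π with (u_2, x, λ(w)) ∈ T''. Then w ≠ λ(u_1) and λ(u_1) ⊊ w does not hold. (Hence the only possibilities are λ(u_1) + w = V, λ(u_1) ⊋ w, or λ(u_1), w distinct nonincident with join ≠ V.) -/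
/-! Dualising the `T''`-triangle `(u₂, x, λw)` by axiom (D) gives the `T'`-triangle
`(λx, λu₂, w)`, so `w ⊊ u₂`; hence `w = λu₁` would put `λu₁` and `u₂` inside `u₂`.
If `λu₁ ⊊ w`, there is a `T'`-triangle `(λu₁, w', λw)`, and axiom (F) glues it to
`(λx, λu₂, w)` along `w`, producing a `T'`-triangle `(λu₂, λu₁, ·)`, i.e. `λu₁ ⊊ u₂`:
again a contradiction with `λu₁ + u₂ = V`. -/

namespace TrianglePresentation

variable {n : ℕ} {P : Type*} (TP : TrianglePresentation n P) {u v w x y : P}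

theorem T'.rotate (h : TP.T' u v w) : TP.T' v w u :=
  ⟨TP.axiomB _ _ _ h.1, by have := h.2; omega⟩

theorem T'_lam_of_T'' (h : TP.T'' u v w) : TP.T' (TP.lam w) (TP.lam v) (TP.lam u) := by
  have hsum := (TP.axiomE _ _ _ h.1).resolve_left h.2
  refine ⟨TP.axiomD _ _ _ h.1, ?_⟩
  have := TP.dim_mem u; have := TP.dim_mem v; have := TP.dim_mem w
  rw [TP.lam_dim, TP.lam_dim, TP.lam_dim]
  omega

/-- Apply axiom (A) to `(λ x, y)`: the dimension sum `n + 1 - dim x + dim y + dim z` of the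
resulting triangle can be neither `n + 1` nor `2 (n + 1)` when `dim x = dim y`. -/
theorem dim_ne_of_incid_s11 (hxy : x ≠ y) (hinc : TP.incid x y) : TP.dim x ≠ TP.dim y := by
  intro hdim
  obtain ⟨z, hz⟩ := (TP.axiomA (TP.lam x) y).mpr (by rw [TP.lam_invol x]; exact ⟨hxy, hinc⟩)
  have hsum := TP.axiomE _ _ _ hz
  have := TP.dim_mem x; have := TP.dim_mem z
  rw [TP.lam_dim] at hsum
  omega

theorem pSub_iff : TP.PSub x y ↔ x ≠ y ∧ TP.incid x y ∧ TP.dim x < TP.dim y := by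
  constructor
  · rintro ⟨hxy | ⟨hinc, hle⟩, hne⟩
    · exact absurd hxy hne
    · exact ⟨hne, hinc, lt_of_le_of_ne hle (TP.dim_ne_of_incid_s11 hne hinc)⟩
  · rintro ⟨hne, hinc, hlt⟩
    exact ⟨Or.inr ⟨hinc, hlt.le⟩, hne⟩

theorem exists_T'_iff_pSub : (∃ w, TP.T' u v w) ↔ TP.PSub v (TP.lam u) := by
  rw [pSub_iff]
  exact (TP.exists_T' u v).trans
    ⟨fun ⟨hne, hinc, hlt⟩ => ⟨Ne.symm hne, TP.incid_symm _ _ hinc, hlt⟩,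
      fun ⟨hne, hinc, hlt⟩ => ⟨Ne.symm hne, TP.incid_symm _ _ hinc, hlt⟩⟩

theorem pSub_of_T' (h : TP.T' u v w) : TP.PSub v (TP.lam u) :=
  TP.exists_T'_iff_pSub.mp ⟨w, h⟩

variable {TP} in
theorem SumV.not_sub (h : TP.SumV x y) : ¬ TP.Sub x y :=
  fun hxy => h ⟨y, hxy, Or.inl rfl⟩

end TrianglePresentation

theorem lemma2_case4_exclusions_general {n : ℕ} {P : Type*} (TP : TrianglePresentation n P)
    (u₁ u₂ x w : P)
    (hnf : TP.SumV (TP.lam u₁) u₂)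
    (hw : TP.T'' u₂ x (TP.lam w)) :
    w ≠ TP.lam u₁ ∧ ¬ TP.PSub (TP.lam u₁) w := by
  have hT' : TP.T' (TP.lam x) (TP.lam u₂) w := by
    simpa only [TP.lam_invol w] using (TP.T'_lam_of_T'' hw).rotate
  have hwu₂ : TP.PSub w u₂ := by
    simpa only [TP.lam_invol u₂] using TP.pSub_of_T' hT'.rotate
  refine ⟨?_, fun hu₁w => ?_⟩
  · rintro rfl
    exact hnf.not_sub hwu₂.1
  · obtain ⟨w', hw'⟩ := TP.exists_T'_iff_pSub.mpr (by rwa [TP.lam_invol w])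
    obtain ⟨z, -, hz⟩ := TP.axiomF _ _ _ _ _ hT' hw'.rotate
    have hu₁u₂ : TP.PSub (TP.lam u₁) u₂ := by
      simpa only [TP.lam_invol u₂] using TP.pSub_of_T' hz
    exact hnf.not_sub hu₁u₂.1

/-- Lemma 2, case (4), first assertions: if `u₁u₂` is in normal form, `λ(u₂) ⊊ x`, and
`(u₂, x, λ(w)) ∈ T''`, then `w ≠ λ(u₁)` and `λ(u₁) ⊊ w` does not hold. -/
theorem lemma2_case4_exclusions {n : ℕ} {P : Type*} (TP : TrianglePresentation n P)
    (u₁ u₂ x w : P)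
    (hnf : TP.SumV (TP.lam u₁) u₂)
    (hx : TP.PSub (TP.lam u₂) x)
    (hw : TP.T'' u₂ x (TP.lam w)) :
    w ≠ TP.lam u₁ ∧ ¬ TP.PSub (TP.lam u₁) w :=
  lemma2_case4_exclusions_general TP u₁ u₂ x w hnf hw
end
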